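/- Let σ be continuously differentiable and positive, S continuous, G(S) < ∞, and let f_S be the invariant density. Let a : ℝ → ℝ be continuous with ∫_ℝ a(x) f_S(x) dx = 0 and ∫_{-∞}^y |a(v)| f_S(v) dv < ∞ for every y. Define G_a(x) = ∫_0^x (σ(y)² f_S(y))^{-1} (∫_{-∞}^y 2 a(v) f_S(v) dv) dy. Then G_a is twice continuously differentiable and solves the Poisson equation S(x) G_a'(x) + (1/2) σ(x)² G_a''(x) = a(x) for all x ∈ ℝ. -/

import Mathlib

open MeasureTheory Real Set Filter intervalIntegral

/-!
Write `m = σ² f_S` for the speed density. By the formula for `f_S`, `m = G(S)⁻¹ exp(2 ∫₀ˣ S/σ²)`,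
so `m' = (2S/σ²) m`. With `A(y) = ∫_{-∞}^y 2 a f_S` we have `G_a' = A/m`, hence
`G_a'' = A'/m - (2S/σ²) A/m`, and in `S G_a' + ½σ² G_a''` the two `S A/m` terms cancel, leaving
`½σ² A'/m = ½σ² · 2 a f_S / (σ² f_S) = a`.
-/

theorem hasDerivAt_integral_Iic {f : ℝ → ℝ} (hf : Continuous f)
    (hfi : ∀ y, IntegrableOn f (Iic y)) (x : ℝ) :
    HasDerivAt (fun y => ∫ v in Iic y, f v) (f x) x := by
  have hsplit : (fun y => ∫ v in Iic y, f v) = fun y => (∫ v in Iic 0, f v) + ∫ v in 0..y, f v := by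
    funext y
    rw [← integral_Iic_sub_Iic (hfi 0) (hfi y), add_sub_cancel]
  rw [hsplit]
  exact (hf.integral_hasStrictDerivAt 0 x).hasDerivAt.const_add _

theorem integrableOn_mul_of_integrableOn_abs_mul {a w : ℝ → ℝ} {s : Set ℝ}
    (ha : Continuous a) (hw : Continuous w) (hw0 : ∀ x, 0 ≤ w x)
    (hint : IntegrableOn (fun v => |a v| * w v) s) :
    IntegrableOn (fun v => a v * w v) s := by
  refine hint.mono' (ha.mul hw).aestronglyMeasurable.restrict (ae_of_all _ fun v => ?_)
  rw [norm_mul, Real.norm_eq_abs, Real.norm_of_nonneg (hw0 v)]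

theorem contDiff_two_of_hasDerivAt {u u' u'' : ℝ → ℝ} (hu : ∀ x, HasDerivAt u (u' x) x)
    (hu' : ∀ x, HasDerivAt u' (u'' x) x) (hu'' : Continuous u'') : ContDiff ℝ 2 u := by
  have hdu : deriv u = u' := funext fun x => (hu x).deriv
  have hdu' : deriv u' = u'' := funext fun x => (hu' x).deriv
  rw [show (2 : WithTop ℕ∞) = 1 + 1 from rfl, contDiff_succ_iff_deriv, hdu,
    contDiff_one_iff_deriv, hdu']
  exact ⟨fun x => (hu x).differentiableAt, by simp, fun x => (hu' x).differentiableAt, hu''⟩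

theorem hasDerivAt_inv_mul_of_hasDerivAt_mul_self {m A b : ℝ → ℝ} {A' : ℝ} {x : ℝ}
    (hm : HasDerivAt m (b x * m x) x) (hm0 : m x ≠ 0) (hA : HasDerivAt A A' x) :
    HasDerivAt (fun y => (m y)⁻¹ * A y) ((m x)⁻¹ * A' - b x * ((m x)⁻¹ * A x)) x :=
  ((hm.inv hm0).mul hA).congr_deriv (by rw [Pi.inv_apply]; field_simp; ring)

theorem poisson_of_integral_inv_mul {S σ m A A' u : ℝ → ℝ} (hS : Continuous S)
    (hσ : Continuous σ) (hσ0 : ∀ x, σ x ≠ 0)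
    (hm : ∀ x, HasDerivAt m (2 * (S x / σ x ^ 2) * m x) x) (hm0 : ∀ x, m x ≠ 0)
    (hA : ∀ x, HasDerivAt A (A' x) x) (hA' : Continuous A')
    (hu : ∀ x, u x = ∫ y in (0:ℝ)..x, (m y)⁻¹ * A y) :
    ContDiff ℝ 2 u ∧
      ∀ x, S x * deriv u x + 1 / 2 * σ x ^ 2 * deriv (deriv u) x = σ x ^ 2 * A' x / (2 * m x) := by
  set φ : ℝ → ℝ := fun y => (m y)⁻¹ * A y
  have hmc : Continuous m := continuous_iff_continuousAt.2 fun x => (hm x).continuousAt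
  have hφ' : ∀ x, HasDerivAt φ ((m x)⁻¹ * A' x - 2 * (S x / σ x ^ 2) * φ x) x := fun x =>
    hasDerivAt_inv_mul_of_hasDerivAt_mul_self (b := fun y => 2 * (S y / σ y ^ 2)) (hm x) (hm0 x)
      (hA x)
  have hφc : Continuous φ := continuous_iff_continuousAt.2 fun x => (hφ' x).continuousAt
  have hu' : ∀ x, HasDerivAt u (φ x) x := fun x => by
    rw [show u = fun x => ∫ y in (0:ℝ)..x, φ y from funext hu]
    exact (hφc.integral_hasStrictDerivAt 0 x).hasDerivAt
  have hdu : deriv u = φ := funext fun x => (hu' x).deriv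
  refine ⟨contDiff_two_of_hasDerivAt hu' hφ' ?_, fun x => ?_⟩
  · have hσ2 : ∀ x, σ x ^ 2 ≠ 0 := fun x => pow_ne_zero 2 (hσ0 x)
    exact ((hmc.inv₀ hm0).mul hA').sub
      ((continuous_const.mul (hS.div (hσ.pow 2) hσ2)).mul hφc)
  · rw [hdu, (hφ' x).deriv]
    have := hσ0 x
    have := hm0 x
    field_simp
    ring

noncomputable def invScaleDensity (σ S : ℝ → ℝ) (x : ℝ) : ℝ :=
  exp (2 * ∫ v in (0:ℝ)..x, S v / σ v ^ 2)

noncomputable def invariantDensity (σ S : ℝ → ℝ) (x : ℝ) : ℝ :=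
  (∫ y, (σ y ^ 2)⁻¹ * invScaleDensity σ S y)⁻¹ * (σ x ^ 2)⁻¹ * invScaleDensity σ S x

section InvariantDensity

variable {σ S : ℝ → ℝ}

theorem hasDerivAt_invScaleDensity (hσ : Continuous σ) (hσ0 : ∀ x, σ x ≠ 0) (hS : Continuous S)
    (x : ℝ) :
    HasDerivAt (invScaleDensity σ S) (2 * (S x / σ x ^ 2) * invScaleDensity σ S x) x := by
  have hg : Continuous fun v => S v / σ v ^ 2 := hS.div (hσ.pow 2) fun x => pow_ne_zero 2 (hσ0 x)
  exact ((hg.integral_hasStrictDerivAt 0 x).hasDerivAt.const_mul 2).exp.congr_deriv <| by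
    rw [invScaleDensity]
    ring

theorem continuous_invariantDensity (hσ : Continuous σ) (hσ0 : ∀ x, σ x ≠ 0)
    (hS : Continuous S) : Continuous (invariantDensity σ S) :=
  (continuous_const.mul ((hσ.pow 2).inv₀ fun x => pow_ne_zero 2 (hσ0 x))).mul <|
    continuous_iff_continuousAt.2 fun x => (hasDerivAt_invScaleDensity hσ hσ0 hS x).continuousAt

theorem invariantDensity_pos (hσ0 : ∀ x, σ x ≠ 0)
    (hG : Integrable fun y => (σ y ^ 2)⁻¹ * invScaleDensity σ S y) (x : ℝ) :
    0 < invariantDensity σ S x := by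
  have hσ2 : ∀ y, 0 < (σ y ^ 2)⁻¹ := fun y => inv_pos.2 (pow_two_pos_of_ne_zero (hσ0 y))
  have hpos : ∀ y, 0 < (σ y ^ 2)⁻¹ * invScaleDensity σ S y := fun y => mul_pos (hσ2 y) (exp_pos _)
  have hGpos : 0 < ∫ y, (σ y ^ 2)⁻¹ * invScaleDensity σ S y := by
    refine (integral_pos_iff_support_of_nonneg (fun y => (hpos y).le) hG).2 ?_
    simp [Function.support, fun y => (hpos y).ne']
  exact mul_pos (mul_pos (inv_pos.2 hGpos) (hσ2 x)) (exp_pos _)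

theorem hasDerivAt_speedDensity (hσ : Continuous σ) (hσ0 : ∀ x, σ x ≠ 0) (hS : Continuous S)
    (x : ℝ) :
    HasDerivAt (fun y => σ y ^ 2 * invariantDensity σ S y)
      (2 * (S x / σ x ^ 2) * (σ x ^ 2 * invariantDensity σ S x)) x := by
  have hspeed : ∀ y, σ y ^ 2 * invariantDensity σ S y =
      (∫ y, (σ y ^ 2)⁻¹ * invScaleDensity σ S y)⁻¹ * invScaleDensity σ S y := fun y => by
    rw [invariantDensity]
    field_simp [hσ0 y]
  simp only [hspeed]
  exact ((hasDerivAt_invScaleDensity hσ hσ0 hS x).const_mul _).congr_deriv (by ring)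

end InvariantDensity

theorem moment_estimation_stmt1
    (σ S : ℝ → ℝ)
    (hσ1 : ContDiff ℝ 1 σ) (hσpos : ∀ x, 0 < σ x)
    (hSc : Continuous S)
    (hGfin : Integrable (fun y : ℝ =>
      ((σ y) ^ 2)⁻¹ * Real.exp (2 * ∫ v in (0:ℝ)..y, S v / (σ v) ^ 2)))
    (fS : ℝ → ℝ)
    (hfS : ∀ x, fS x =
      (∫ y : ℝ, ((σ y) ^ 2)⁻¹ * Real.exp (2 * ∫ v in (0:ℝ)..y, S v / (σ v) ^ 2))⁻¹
        * ((σ x) ^ 2)⁻¹ * Real.exp (2 * ∫ v in (0:ℝ)..x, S v / (σ v) ^ 2))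
    (a : ℝ → ℝ) (hac : Continuous a)
    (haint : ∀ y : ℝ, IntegrableOn (fun v => |a v| * fS v) (Set.Iic y))
    (Ga : ℝ → ℝ)
    (hGa : ∀ x, Ga x =
      ∫ y in (0:ℝ)..x, ((σ y) ^ 2 * fS y)⁻¹ * (∫ v in Set.Iic y, 2 * a v * fS v)) :
    ContDiff ℝ 2 Ga ∧
      ∀ x : ℝ, S x * deriv Ga x + (1 / 2) * (σ x) ^ 2 * deriv (deriv Ga) x = a x := by
  obtain rfl : fS = invariantDensity σ S := funext hfS
  have hσc : Continuous σ := hσ1.continuous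
  have hσ0 : ∀ x, σ x ≠ 0 := fun x => (hσpos x).ne'
  have hfSc := continuous_invariantDensity hσc hσ0 hSc
  have hfSpos := invariantDensity_pos hσ0 hGfin
  have hhint : ∀ y, IntegrableOn (fun v => 2 * a v * invariantDensity σ S v) (Iic y) := fun y => by
    simp_rw [mul_assoc]
    exact (integrableOn_mul_of_integrableOn_abs_mul hac hfSc (fun x => (hfSpos x).le)
      (haint y)).const_mul 2
  obtain ⟨hC2, hpoisson⟩ := poisson_of_integral_inv_mul hSc hσc hσ0
    (hasDerivAt_speedDensity hσc hσ0 hSc) (fun x => (mul_pos (pow_pos (hσpos x) 2) (hfSpos x)).ne')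
    (hasDerivAt_integral_Iic (by fun_prop) hhint) (by fun_prop) hGa
  refine ⟨hC2, fun x => ?_⟩
  rw [hpoisson x]
  have := (hfSpos x).ne'
  field_simp [hσ0 x]
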